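/- For any finitely supported probability measure ρ on a finite set of indices and real-valued function p on that set with 0 < p i ≤ C for all i, one has −ln(E_ρ[p]) ≤ E_ρ[−ln p] − Var_ρ(p)/(2C²) where Var_ρ(p) = E_ρ[(p − E_ρ p)²]. -/

import Mathlib

open Real Set Finset

theorem sum_mul_sub_sum_mul_sq {ι R : Type*} [CommRing R] (s : Finset ι) (w x : ι → R)
    (hw : ∑ i ∈ s, w i = 1) :
    ∑ i ∈ s, w i * (x i - ∑ j ∈ s, w j * x j) ^ 2 =
      ∑ i ∈ s, w i * x i ^ 2 - (∑ i ∈ s, w i * x i) ^ 2 := by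
  set m := ∑ j ∈ s, w j * x j
  have hexpand : ∀ i, w i * (x i - m) ^ 2 = w i * x i ^ 2 - 2 * m * (w i * x i) + m ^ 2 * w i :=
    fun i => by ring
  simp only [hexpand, sum_add_distrib, sum_sub_distrib, ← mul_sum, hw]
  ring

/-- `-log` has second derivative `t⁻² ≥ C⁻²` on `(0, C]`, so subtracting `t² / (2C²)` keeps it
convex. -/
theorem convexOn_neg_log_sub_sq_div (C : ℝ) :
    ConvexOn ℝ (Ioc 0 C) (fun t => -log t - t ^ 2 / (2 * C ^ 2)) := by
  have hderiv : ∀ t : ℝ, 0 < t →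
      HasDerivAt (fun t => -log t - t ^ 2 / (2 * C ^ 2)) (-t⁻¹ - t / C ^ 2) t := by
    intro t ht
    refine ((hasDerivAt_log ht.ne').neg.sub
      ((hasDerivAt_pow 2 t).div_const (2 * C ^ 2))).congr_deriv ?_
    norm_num
    ring
  have hderiv2 : ∀ t : ℝ, 0 < t →
      HasDerivAt (fun t => -t⁻¹ - t / C ^ 2) ((t ^ 2)⁻¹ - (C ^ 2)⁻¹) t := by
    intro t ht
    refine ((hasDerivAt_inv ht.ne').neg.sub
      ((hasDerivAt_id t).div_const (C ^ 2))).congr_deriv ?_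
    rw [neg_neg, one_div]
  refine convexOn_of_hasDerivWithinAt2_nonneg (convex_Ioc 0 C)
    (f' := fun t => -t⁻¹ - t / C ^ 2) (f'' := fun t => (t ^ 2)⁻¹ - (C ^ 2)⁻¹)
    (fun t ht => (hderiv t ht.1).continuousAt.continuousWithinAt) ?_ ?_ ?_ <;> rw [interior_Ioc]
  · exact fun t ht => (hderiv t ht.1).hasDerivWithinAt
  · exact fun t ht => (hderiv2 t ht.1).hasDerivWithinAt
  · intro t ht
    have hinv : (C ^ 2)⁻¹ ≤ (t ^ 2)⁻¹ := inv_anti₀ (pow_pos ht.1 2) (pow_le_pow_left₀ ht.1.le ht.2.le 2)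
    linarith

theorem second_order_jensen_log_general {ι : Type*} [Fintype ι] (ρ p : ι → ℝ) (C : ℝ)
    (hρ0 : ∀ i, 0 ≤ ρ i) (hρ1 : ∑ i, ρ i = 1)
    (hp0 : ∀ i, 0 < p i) (hpC : ∀ i, p i ≤ C) :
    -Real.log (∑ i, ρ i * p i) ≤
      (∑ i, ρ i * (-Real.log (p i))) -
        (∑ i, ρ i * (p i - ∑ j, ρ j * p j) ^ 2) / (2 * C ^ 2) := by
  have hjensen := (convexOn_neg_log_sub_sq_div C).map_sum_le (t := univ) (w := ρ) (p := p)
    (fun i _ => hρ0 i) hρ1 (fun i _ => ⟨hp0 i, hpC i⟩)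
  have hsplit : ∑ i, ρ i * (-log (p i) - p i ^ 2 / (2 * C ^ 2)) =
      ∑ i, ρ i * -log (p i) - (∑ i, ρ i * p i ^ 2) / (2 * C ^ 2) := by
    rw [sum_div, ← sum_sub_distrib]
    exact sum_congr rfl fun i _ => by ring
  simp only [smul_eq_mul, hsplit] at hjensen
  rw [sum_mul_sub_sum_mul_sq univ ρ p hρ1, sub_div]
  linarith

/-- Second-order Jensen inequality for `-log`: for a probability mass function ρ
on a finite index set and `0 < p i ≤ C`,
`−ln(E_ρ[p]) ≤ E_ρ[−ln p] − Var_ρ(p)/(2C²)`. -/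
theorem second_order_jensen_log {ι : Type*} [Fintype ι] (ρ p : ι → ℝ) (C : ℝ)
    (hC : 0 < C) (hρ0 : ∀ i, 0 ≤ ρ i) (hρ1 : ∑ i, ρ i = 1)
    (hp0 : ∀ i, 0 < p i) (hpC : ∀ i, p i ≤ C) :
    -Real.log (∑ i, ρ i * p i) ≤
      (∑ i, ρ i * (-Real.log (p i))) -
        (∑ i, ρ i * (p i - ∑ j, ρ j * p j) ^ 2) / (2 * C ^ 2) :=
  second_order_jensen_log_general ρ p C hρ0 hρ1 hp0 hpC
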